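/- For b ∈ [0,1], define ρ_b : [0,1] → ℝ by ρ_b(t) = (1−t²)^{−1/2} for 0 ≤ t ≤ b/√(1+b²), ρ_b(t) = (1+b)/(t + √(1−t²)) for b/√(1+b²) ≤ t ≤ 1/√(1+b²), and ρ_b(t) = 1/t for 1/√(1+b²) ≤ t ≤ 1. Then ∫₀¹ t²·ρ_b(t)⁵ dt = (1 + 5b + 10b² − 5b⁴ − b⁵)/12. -/

import Mathlib

open Set

section OctHelpers

private lemma sqrt_one_sub_sq_hasDerivAt {t : ℝ} (h : t^2 < 1) :
    HasDerivAt (fun t : ℝ => Real.sqrt (1 - t^2)) (-t / Real.sqrt (1 - t^2)) t := by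
  have h1 : (1 : ℝ) - t^2 ≠ 0 := by nlinarith
  have := (Real.hasDerivAt_sqrt h1).comp t ((hasDerivAt_pow 2 t).const_sub 1)
  refine this.congr_deriv (Eq.symm ?_)
  field_simp; ring

private lemma oct_ts_ge_one {t : ℝ} (h0 : 0 ≤ t) (h1 : t^2 ≤ 1) :
    1 ≤ t + Real.sqrt (1 - t^2) := by
  have hs : 0 ≤ Real.sqrt (1 - t^2) := Real.sqrt_nonneg _
  have hsq : Real.sqrt (1-t^2)^2 = 1 - t^2 := Real.sq_sqrt (by nlinarith)
  nlinarith [mul_nonneg h0 hs]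

private lemma oct_hdF1 {t : ℝ} (h : t^2 < 1) :
    HasDerivAt (fun t : ℝ => t^3 / (3 * Real.sqrt (1-t^2)^3))
      (t^2 * ((Real.sqrt (1-t^2))⁻¹)^5) t := by
  have hpos : (0:ℝ) < 1 - t^2 := by nlinarith
  have hs : (0:ℝ) < Real.sqrt (1-t^2) := Real.sqrt_pos.mpr hpos
  have hsq : Real.sqrt (1-t^2)^2 = 1 - t^2 := Real.sq_sqrt hpos.le
  have h1 : HasDerivAt (fun t : ℝ => t^3) (3*t^2) t := by simpa using hasDerivAt_pow 3 t
  have h2 : HasDerivAt (fun t : ℝ => 3 * Real.sqrt (1-t^2)^3)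
      (3 * (3 * Real.sqrt (1-t^2)^2 * (-t / Real.sqrt (1-t^2)))) t :=
    ((sqrt_one_sub_sq_hasDerivAt h).pow 3).const_mul 3
  have := h1.div h2 (by positivity)
  refine this.congr_deriv (Eq.symm ?_)
  field_simp
  linear_combination (-t^2) * hsq

private lemma oct_hdX {t : ℝ} (h0 : 0 < t) (h : t^2 < 1) :
    HasDerivAt (fun t : ℝ => (t - Real.sqrt (1-t^2))/(t + Real.sqrt (1-t^2)))
      (2 / (Real.sqrt (1-t^2) * (t + Real.sqrt (1-t^2))^2)) t := by
  have hpos : (0:ℝ) < 1 - t^2 := by nlinarith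
  have hs : (0:ℝ) < Real.sqrt (1-t^2) := Real.sqrt_pos.mpr hpos
  have hsq : Real.sqrt (1-t^2)^2 = 1 - t^2 := Real.sq_sqrt hpos.le
  have hts : (0:ℝ) < t + Real.sqrt (1-t^2) := by positivity
  have hnum : HasDerivAt (fun t : ℝ => t - Real.sqrt (1-t^2))
      (1 - (-t / Real.sqrt (1-t^2))) t :=
    (hasDerivAt_id t).sub (sqrt_one_sub_sq_hasDerivAt h)
  have hden : HasDerivAt (fun t : ℝ => t + Real.sqrt (1-t^2))
      (1 + (-t / Real.sqrt (1-t^2))) t :=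
    (hasDerivAt_id t).add (sqrt_one_sub_sq_hasDerivAt h)
  have := hnum.div hden hts.ne'
  refine this.congr_deriv (Eq.symm ?_)
  field_simp
  linear_combination (-2) * hsq

private lemma oct_hdG (b : ℝ) {t : ℝ} (h0 : 0 < t) (h : t^2 < 1) :
    HasDerivAt (fun t : ℝ => (1+b)^5/16 *
      (((t - Real.sqrt (1-t^2))/(t + Real.sqrt (1-t^2)))
        - ((t - Real.sqrt (1-t^2))/(t + Real.sqrt (1-t^2)))^3/3
        + ((t - Real.sqrt (1-t^2))/(t + Real.sqrt (1-t^2)))^2/2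
        - ((t - Real.sqrt (1-t^2))/(t + Real.sqrt (1-t^2)))^4/4))
      (t^2 * ((1+b)/(t + Real.sqrt (1-t^2)))^5) t := by
  have hpos : (0:ℝ) < 1 - t^2 := by nlinarith
  have hs : (0:ℝ) < Real.sqrt (1-t^2) := Real.sqrt_pos.mpr hpos
  have hts : (0:ℝ) < t + Real.sqrt (1-t^2) := by positivity
  have hx := oct_hdX h0 h
  have hP := (((hx.sub ((hx.pow 3).div_const 3)).add ((hx.pow 2).div_const 2)).sub
      ((hx.pow 4).div_const 4)).const_mul ((1+b)^5/16)
  refine hP.congr_deriv (Eq.symm ?_)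
  norm_num
  field_simp
  ring

private lemma oct_hdF3 {t : ℝ} (h0 : 0 < t) :
    HasDerivAt (fun t : ℝ => -((2*t^2)⁻¹)) (t^2 * (t⁻¹)^5) t := by
  have h1 : HasDerivAt (fun t : ℝ => 2*t^2) (2*(2*t)) t := by
    simpa using ((hasDerivAt_pow 2 t).const_mul 2)
  have := (h1.inv (by positivity)).neg
  refine this.congr_deriv (Eq.symm ?_)
  field_simp

end OctHelpers

set_option maxHeartbeats 1600000

/-- The radial profile of the body `K_b` in `ℝ⁶`, obtained by revolving an octagon:
`ρ_b(t) = (1−t²)^{−1/2}` for `0 ≤ t ≤ b/√(1+b²)`,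
`ρ_b(t) = (1+b)/(t + √(1−t²))` for `b/√(1+b²) ≤ t ≤ 1/√(1+b²)`, and
`ρ_b(t) = 1/t` for `1/√(1+b²) ≤ t ≤ 1`. -/
noncomputable def ρOct (b t : ℝ) : ℝ :=
  if t ≤ b / Real.sqrt (1 + b ^ 2) then (Real.sqrt (1 - t ^ 2))⁻¹
  else if t ≤ (Real.sqrt (1 + b ^ 2))⁻¹ then (1 + b) / (t + Real.sqrt (1 - t ^ 2))
  else t⁻¹

/-- For `b ∈ [0,1]`, the quantity `k(1) = ∫₀¹ t²ρ_b(t)⁵ dt` of the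
six-dimensional criterion equals `(1 + 5b + 10b² − 5b⁴ − b⁵)/12`. -/
theorem octagon_k_integral (b : ℝ) (hb : b ∈ Icc (0 : ℝ) 1) :
    (∫ t in (0 : ℝ)..1, t ^ 2 * ρOct b t ^ 5) =
      (1 + 5 * b + 10 * b ^ 2 - 5 * b ^ 4 - b ^ 5) / 12 := by
  obtain ⟨hb0, hb1⟩ := hb
  set u : ℝ := Real.sqrt (1 + b ^ 2) with hu
  have hu2 : u ^ 2 = 1 + b ^ 2 := Real.sq_sqrt (by positivity)
  have hupos : (0:ℝ) < u := Real.sqrt_pos.mpr (by positivity)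
  set a : ℝ := b / u with haa
  set c : ℝ := u⁻¹ with hcc
  have ha0 : 0 ≤ a := div_nonneg hb0 hupos.le
  have hblt : b < u := by nlinarith
  have ha1 : a < 1 := (div_lt_one hupos).mpr hblt
  have h1u : 1 ≤ u := by nlinarith
  have hc1 : c ≤ 1 := by rw [hcc]; exact inv_le_one_of_one_le₀ h1u
  have hcpos : 0 < c := inv_pos.mpr hupos
  have hac : a ≤ c := by
    rw [haa, hcc, div_le_iff₀ hupos, inv_mul_cancel₀ hupos.ne'] at *
    exact hb1
  have hsa : Real.sqrt (1 - a ^ 2) = c := by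
    have h : 1 - a ^ 2 = c ^ 2 := by
      rw [haa, hcc]; field_simp; linarith [hu2]
    rw [h, Real.sqrt_sq hcpos.le]
  have hsc : Real.sqrt (1 - c ^ 2) = a := by
    have h : 1 - c ^ 2 = a ^ 2 := by
      rw [haa, hcc]; field_simp; linarith [hu2]
    rw [h, Real.sqrt_sq ha0]
  -- the three smooth pieces
  set g1 : ℝ → ℝ := fun t => t ^ 2 * ((Real.sqrt (1 - t ^ 2))⁻¹) ^ 5 with hg1
  set g2 : ℝ → ℝ := fun t => t ^ 2 * ((1 + b) / (t + Real.sqrt (1 - t ^ 2))) ^ 5 with hg2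
  set g3 : ℝ → ℝ := fun t => t ^ 2 * (t⁻¹) ^ 5 with hg3
  have hcont1 : ContinuousOn g1 (Icc 0 a) := by
    apply ContinuousOn.mul (continuous_pow 2).continuousOn
    apply ContinuousOn.pow
    apply ContinuousOn.inv₀
    · exact (Real.continuous_sqrt.comp (continuous_const.sub (continuous_pow 2))).continuousOn
    · intro t ht
      have : (0:ℝ) < 1 - t ^ 2 := by nlinarith [ht.1, ht.2]
      positivity
  have hcont2 : ContinuousOn g2 (Icc a c) := by
    apply ContinuousOn.mul (continuous_pow 2).continuousOn
    apply ContinuousOn.pow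
    apply ContinuousOn.div continuousOn_const
    · exact (continuous_id.add (Real.continuous_sqrt.comp
        (continuous_const.sub (continuous_pow 2)))).continuousOn
    · intro t ht
      have h1 : 1 ≤ t + Real.sqrt (1 - t ^ 2) :=
        oct_ts_ge_one (le_trans ha0 ht.1) (by nlinarith [ht.1, ht.2, le_trans ha0 ht.1])
      linarith
  have hcont3 : ContinuousOn g3 (Icc c 1) := by
    apply ContinuousOn.mul (continuous_pow 2).continuousOn
    apply ContinuousOn.pow
    apply ContinuousOn.inv₀ continuousOn_id
    intro t ht
    exact (lt_of_lt_of_le hcpos ht.1).ne'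
  have hicc1 : uIcc (0:ℝ) a = Icc 0 a := uIcc_of_le ha0
  have hicc2 : uIcc a c = Icc a c := uIcc_of_le hac
  have hicc3 : uIcc c (1:ℝ) = Icc c 1 := uIcc_of_le hc1
  have hint1 : IntervalIntegrable g1 MeasureTheory.volume 0 a :=
    (hicc1 ▸ hcont1).intervalIntegrable
  have hint2 : IntervalIntegrable g2 MeasureTheory.volume a c :=
    (hicc2 ▸ hcont2).intervalIntegrable
  have hint3 : IntervalIntegrable g3 MeasureTheory.volume c 1 :=
    (hicc3 ▸ hcont3).intervalIntegrable
  -- pointwise identification of the integrand with the pieces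
  set f : ℝ → ℝ := fun t => t ^ 2 * ρOct b t ^ 5 with hf
  have heq1 : EqOn g1 f (Ioc 0 a) := by
    intro t ht
    have : t ≤ b / Real.sqrt (1 + b ^ 2) := by rw [← hu, ← haa]; exact ht.2
    simp only [hf, hg1, ρOct, if_pos this]
  have heq2 : EqOn g2 f (Ioc a c) := by
    intro t ht
    have h1 : ¬ t ≤ b / Real.sqrt (1 + b ^ 2) := by rw [← hu, ← haa]; exact not_le.mpr ht.1
    have h2 : t ≤ (Real.sqrt (1 + b ^ 2))⁻¹ := by rw [← hu, ← hcc]; exact ht.2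
    simp only [hf, hg2, ρOct, if_neg h1, if_pos h2]
  have heq3 : EqOn g3 f (Ioc c 1) := by
    intro t ht
    have h1 : ¬ t ≤ b / Real.sqrt (1 + b ^ 2) := by
      rw [← hu, ← haa]; exact not_le.mpr (lt_of_le_of_lt hac ht.1)
    have h2 : ¬ t ≤ (Real.sqrt (1 + b ^ 2))⁻¹ := by rw [← hu, ← hcc]; exact not_le.mpr ht.1
    simp only [hf, hg3, ρOct, if_neg h1, if_neg h2]
  -- integrability of f on pieces
  have hfint1 : IntervalIntegrable f MeasureTheory.volume 0 a := by
    rw [intervalIntegrable_iff_integrableOn_Ioc_of_le ha0]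
    exact ((hcont1.integrableOn_Icc).mono_set Ioc_subset_Icc_self).congr_fun heq1
      measurableSet_Ioc
  have hfint2 : IntervalIntegrable f MeasureTheory.volume a c := by
    rw [intervalIntegrable_iff_integrableOn_Ioc_of_le hac]
    exact ((hcont2.integrableOn_Icc).mono_set Ioc_subset_Icc_self).congr_fun heq2
      measurableSet_Ioc
  have hfint3 : IntervalIntegrable f MeasureTheory.volume c 1 := by
    rw [intervalIntegrable_iff_integrableOn_Ioc_of_le hc1]
    exact ((hcont3.integrableOn_Icc).mono_set Ioc_subset_Icc_self).congr_fun heq3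
      measurableSet_Ioc
  -- split the integral
  have hsplit : (∫ t in (0:ℝ)..1, f t) =
      (∫ t in (0:ℝ)..a, f t) + (∫ t in a..c, f t) + (∫ t in c..(1:ℝ), f t) := by
    rw [intervalIntegral.integral_add_adjacent_intervals hfint1 hfint2,
      intervalIntegral.integral_add_adjacent_intervals (hfint1.trans hfint2) hfint3]
  -- replace f by the pieces
  have hcg1 : (∫ t in (0:ℝ)..a, f t) = ∫ t in (0:ℝ)..a, g1 t :=
    intervalIntegral.integral_congr_ae <| Filter.Eventually.of_forall fun t ht =>
      (heq1 (by rwa [uIoc_of_le ha0] at ht)).symm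
  have hcg2 : (∫ t in a..c, f t) = ∫ t in a..c, g2 t :=
    intervalIntegral.integral_congr_ae <| Filter.Eventually.of_forall fun t ht =>
      (heq2 (by rwa [uIoc_of_le hac] at ht)).symm
  have hcg3 : (∫ t in c..(1:ℝ), f t) = ∫ t in c..(1:ℝ), g3 t :=
    intervalIntegral.integral_congr_ae <| Filter.Eventually.of_forall fun t ht =>
      (heq3 (by rwa [uIoc_of_le hc1] at ht)).symm
  -- evaluate piece 1
  have hI1 : (∫ t in (0:ℝ)..a, g1 t) = b ^ 3 / 3 := by
    have hF : ∀ t ∈ Ioo (0:ℝ) a, HasDerivAt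
        (fun t : ℝ => t^3 / (3 * Real.sqrt (1-t^2)^3)) (g1 t) t := by
      intro t ht
      exact oct_hdF1 (by nlinarith [ht.1, ht.2])
    have hcF : ContinuousOn (fun t : ℝ => t^3 / (3 * Real.sqrt (1-t^2)^3)) (Icc 0 a) := by
      apply ContinuousOn.div (continuous_pow 3).continuousOn
      · exact (continuous_const.mul ((Real.continuous_sqrt.comp
          (continuous_const.sub (continuous_pow 2))).pow 3)).continuousOn
      · intro t ht
        have : (0:ℝ) < 1 - t ^ 2 := by nlinarith [ht.1, ht.2]
        have := Real.sqrt_pos.mpr this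
        positivity
    rw [intervalIntegral.integral_eq_sub_of_hasDerivAt_of_le ha0 hcF hF hint1]
    rw [show (1:ℝ) - a^2 = 1 - a^2 from rfl]
    rw [hsa]
    rw [haa, hcc]
    field_simp
    simp
  -- evaluate piece 3
  have hI3 : (∫ t in c..(1:ℝ), g3 t) = b ^ 2 / 2 := by
    have hF : ∀ t ∈ Ioo c (1:ℝ), HasDerivAt
        (fun t : ℝ => -((2*t^2)⁻¹)) (g3 t) t := fun t ht =>
      oct_hdF3 (lt_trans hcpos ht.1)
    have hcF : ContinuousOn (fun t : ℝ => -((2*t^2)⁻¹)) (Icc c 1) := by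
      apply ContinuousOn.neg
      apply ContinuousOn.inv₀ (continuous_const.mul (continuous_pow 2)).continuousOn
      intro t ht
      have : 0 < t := lt_of_lt_of_le hcpos ht.1
      show 2 * t ^ 2 ≠ 0
      positivity
    rw [intervalIntegral.integral_eq_sub_of_hasDerivAt_of_le hc1 hcF hF hint3]
    rw [hcc]
    field_simp
    linarith [hu2]
  -- evaluate piece 2
  have hI2 : (∫ t in a..c, g2 t) =
      (3*(1-b)*(1+b)^4 - (1-b)^3*(1+b)^2) / 24 := by
    set G : ℝ → ℝ := fun t => (1+b)^5/16 *
      (((t - Real.sqrt (1-t^2))/(t + Real.sqrt (1-t^2)))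
        - ((t - Real.sqrt (1-t^2))/(t + Real.sqrt (1-t^2)))^3/3
        + ((t - Real.sqrt (1-t^2))/(t + Real.sqrt (1-t^2)))^2/2
        - ((t - Real.sqrt (1-t^2))/(t + Real.sqrt (1-t^2)))^4/4) with hG
    have hF : ∀ t ∈ Ioo a c, HasDerivAt G (g2 t) t := by
      intro t ht
      exact oct_hdG b (lt_of_le_of_lt ha0 ht.1) (by nlinarith [ht.1, ht.2, lt_of_le_of_lt ha0 ht.1])
    have hcX : ContinuousOn (fun t : ℝ => (t - Real.sqrt (1-t^2))/(t + Real.sqrt (1-t^2)))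
        (Icc a c) := by
      apply ContinuousOn.div
      · exact (continuous_id.sub (Real.continuous_sqrt.comp
          (continuous_const.sub (continuous_pow 2)))).continuousOn
      · exact (continuous_id.add (Real.continuous_sqrt.comp
          (continuous_const.sub (continuous_pow 2)))).continuousOn
      · intro t ht
        have h1 : 1 ≤ t + Real.sqrt (1 - t ^ 2) :=
          oct_ts_ge_one (le_trans ha0 ht.1) (by nlinarith [ht.1, ht.2, le_trans ha0 ht.1])
        linarith
    have hcF : ContinuousOn G (Icc a c) := by
      apply ContinuousOn.mul continuousOn_const
      exact ((hcX.sub ((hcX.pow 3).div_const 3)).add ((hcX.pow 2).div_const 2)).sub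
        ((hcX.pow 4).div_const 4)
    rw [intervalIntegral.integral_eq_sub_of_hasDerivAt_of_le hac hcF hF hint2]
    have hb1pos : (0:ℝ) < 1 + b := by linarith
    have hXc : (c - Real.sqrt (1-c^2))/(c + Real.sqrt (1-c^2)) = (1-b)/(1+b) := by
      rw [hsc, haa, hcc]
      rw [div_eq_div_iff (by positivity) (by positivity)]
      field_simp
    have hXa : (a - Real.sqrt (1-a^2))/(a + Real.sqrt (1-a^2)) = -((1-b)/(1+b)) := by
      rw [hsa, haa, hcc]
      rw [div_eq_iff (by positivity)]
      field_simp
      ring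
    rw [hG]
    simp only [hXc, hXa]
    field_simp
    ring
  rw [hsplit, hcg1, hcg2, hcg3, hI1, hI2, hI3]
  field_simp
  ring
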